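/- With wave packets $f_t$ at $(x_0,\xi_0)$, $|\xi_0|=1$, parameter $\lambda>1$, if $(t,s)\in[T,2T]^2$ and $|t^\lambda - s^\lambda|\le T/4$, then $|(f_t|f_s)_{L^2}| \ge b^2 2^{-d/2}|B_{1/4}|$, where $b>0$ is the constant from $b\mathbf{1}_{B_{1/2}}\le\widehat\chi\le b\mathbf{1}_{B_1}$ and $|B_{1/4}|$ is the volume of the ball of radius $1/4$. -/

import Mathlib

open MeasureTheory Filter Complex

noncomputable section

abbrev Ed (d : ℕ) := EuclideanSpace ℝ (Fin d)

def FT {d : ℕ} (f : Ed d → ℂ) (ξ : Ed d) : ℂ :=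
  ((2 * Real.pi) ^ (-(d : ℝ) / 2) : ℝ) *
    ∫ x : Ed d, Complex.exp (-Complex.I * ((inner ℝ ξ x : ℝ) : ℂ)) * f x

def wavePacket {d : ℕ} (χ : Ed d → ℂ) (x₀ ξ₀ : Ed d) (lam t : ℝ) (x : Ed d) : ℂ :=
  ((t ^ ((d : ℝ) / 2) : ℝ) : ℂ) * χ (t • (x - x₀)) *
    Complex.exp (Complex.I * ((t ^ lam : ℝ) : ℂ) * ((inner ℝ ξ₀ (x - x₀) : ℝ) : ℂ))

def L2inner {d : ℕ} (f g : Ed d → ℂ) : ℂ := ∫ x : Ed d, (starRingEnd ℂ) (f x) * g x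

def sobInner {d : ℕ} (β : ℝ) (f g : Ed d → ℂ) : ℂ :=
  ∫ ξ : Ed d, (((1 + ‖ξ‖ ^ 2) ^ β : ℝ) : ℂ) * ((starRingEnd ℂ) (FT f ξ) * FT g ξ)

def sobNormSq {d : ℕ} (β : ℝ) (f : Ed d → ℂ) : ℝ :=
  ∫ ξ : Ed d, (1 + ‖ξ‖ ^ 2) ^ β * ‖FT f ξ‖ ^ 2

def psiOp {d : ℕ} (a : Ed d → Ed d → ℂ) (f : Ed d → ℂ) (x : Ed d) : ℂ :=
  ((2 * Real.pi) ^ (-(d : ℝ) / 2) : ℝ) *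
    ∫ ξ : Ed d, Complex.exp (Complex.I * ((inner ℝ x ξ : ℝ) : ℂ)) * a x ξ * FT f ξ

def IsClassicalSymbol {d : ℕ} (m : ℝ) (a : Ed d → Ed d → ℂ) : Prop :=
  ContDiff ℝ (⊤ : ℕ∞) (Function.uncurry a) ∧
  ∀ j k : ℕ, ∃ C > 0, ∀ x ξ : Ed d,
    ‖iteratedFDeriv ℝ j (fun y => iteratedFDeriv ℝ k (a y) ξ) x‖ ≤ C * (1 + ‖ξ‖ ^ 2) ^ ((m - k) / 2)

def IsHomogeneousSymbol {d : ℕ} (m : ℝ) (a : Ed d → Ed d → ℂ) : Prop :=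
  ∀ (x ξ : Ed d) (t : ℝ), 1 / 2 ≤ ‖ξ‖ → 1 ≤ t → a x (t • ξ) = ((t ^ m : ℝ) : ℂ) * a x ξ

def IsCenteredComplexGaussian {Ω : Type*} [MeasureSpace Ω] (Z : Ω → ℂ) : Prop :=
  ∀ a b : ℝ, ∃ v : NNReal,
    Measure.map (fun ω => a * (Z ω).re + b * (Z ω).im) (volume : Measure Ω)
      = ProbabilityTheory.gaussianReal 0 v

end

section Aux
open FourierTransform

theorem FT_eq {d : ℕ} (f : Ed d → ℂ) (ξ : Ed d) :
    FT f ξ = (((2 * Real.pi) ^ (-(d : ℝ) / 2) : ℝ) : ℂ) * 𝓕 f ((2 * Real.pi)⁻¹ • ξ) := by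
  rw [FT, Real.fourier_eq']
  congr 1
  refine integral_congr_ae (Eventually.of_forall fun x => ?_)
  simp only [smul_eq_mul, real_inner_smul_right]
  have h2π : (2 * Real.pi) ≠ 0 := by positivity
  rw [show -2 * Real.pi * ((2 * Real.pi)⁻¹ * inner ℝ x ξ) = -(inner ℝ x ξ : ℝ) by
    field_simp]
  rw [real_inner_comm x ξ]
  push_cast
  ring_nf

theorem FT_cont {d : ℕ} (χ : SchwartzMap (Ed d) ℂ) : Continuous (FT ⇑χ) := by
  have h1 : Continuous (𝓕 ⇑χ) := by
    rw [← SchwartzMap.fourier_coe]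
    exact (𝓕 χ).continuous
  have : FT ⇑χ = fun ξ => (((2 * Real.pi) ^ (-(d : ℝ) / 2) : ℝ) : ℂ) *
      𝓕 ⇑χ ((2 * Real.pi)⁻¹ • ξ) := funext fun ξ => FT_eq _ ξ
  rw [this]
  exact continuous_const.mul (h1.comp (continuous_const_smul _))

theorem FT_int {d : ℕ} (χ : SchwartzMap (Ed d) ℂ)
    (hχsupp : ∀ ξ : Ed d, 1 ≤ ‖ξ‖ → FT ⇑χ ξ = 0) : Integrable (FT ⇑χ) := by
  refine (FT_cont χ).integrable_of_hasCompactSupport ?_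
  refine HasCompactSupport.intro (isCompact_closedBall (0 : Ed d) 1) fun ξ hξ => ?_
  exact hχsupp ξ (le_of_lt (by simpa [Metric.mem_closedBall, dist_zero_right] using hξ))

theorem FT_inversion {d : ℕ} (χ : SchwartzMap (Ed d) ℂ)
    (hχsupp : ∀ ξ : Ed d, 1 ≤ ‖ξ‖ → FT ⇑χ ξ = 0) (x : Ed d) :
    χ x = (((2 * Real.pi) ^ (-(d : ℝ) / 2) : ℝ) : ℂ) *
      ∫ ξ : Ed d, Complex.exp (Complex.I * ((inner ℝ x ξ : ℝ) : ℂ)) * FT ⇑χ ξ := by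
  have h2π : (0:ℝ) < 2 * Real.pi := by positivity
  set c : ℝ := (2 * Real.pi) ^ (-(d : ℝ) / 2) with hc
  have hcpos : 0 < c := Real.rpow_pos_of_pos h2π _
  -- 𝓕 χ is integrable
  have h𝓕int : Integrable (𝓕 ⇑χ) := by
    rw [← SchwartzMap.fourier_coe]
    exact (𝓕 χ).integrable
  have hinv : 𝓕⁻ (𝓕 ⇑χ) x = χ x :=
    congrFun (χ.continuous.fourierInv_fourier_eq χ.integrable h𝓕int) x
  rw [Real.fourierInv_eq'] at hinv
  -- change of variables in the RHS integral
  set G : Ed d → ℂ := fun w => Complex.exp ((↑(2 * Real.pi * (inner ℝ w x : ℝ)) * Complex.I)) • 𝓕 ⇑χ w with hG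
  have hcv : ∫ ξ : Ed d, Complex.exp (Complex.I * ((inner ℝ x ξ : ℝ) : ℂ)) * FT ⇑χ ξ
      = ∫ ξ : Ed d, (c : ℂ) * G ((2 * Real.pi)⁻¹ • ξ) := by
    refine integral_congr_ae (Eventually.of_forall fun ξ => ?_)
    beta_reduce
    rw [FT_eq, hG, ← hc]
    simp only [smul_eq_mul, real_inner_smul_left]
    rw [show 2 * Real.pi * ((2 * Real.pi)⁻¹ * (inner ℝ ξ x : ℝ)) = (inner ℝ ξ x : ℝ) by
      field_simp]
    rw [real_inner_comm ξ x]
    push_cast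
    ring
  rw [hcv, integral_const_mul]
  have hscale : ∫ ξ : Ed d, G ((2 * Real.pi)⁻¹ • ξ)
      = |((2 * Real.pi)⁻¹ ^ (Module.finrank ℝ (Ed d)))⁻¹| • ∫ w, G w :=
    MeasureTheory.Measure.integral_comp_smul volume G ((2 * Real.pi)⁻¹)
  rw [hscale]
  have hGx : ∫ w, G w = χ x := hinv
  rw [hGx, finrank_euclideanSpace_fin, Complex.real_smul, ← mul_assoc, ← mul_assoc]
  have habs : |((2 * Real.pi)⁻¹ ^ d)⁻¹| = (2 * Real.pi) ^ (d:ℝ) := by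
    rw [abs_of_pos (by positivity), inv_pow, inv_inv, Real.rpow_natCast]
  have hreal : c * c * ((2 * Real.pi) ^ d) = 1 := by
    rw [← Real.rpow_natCast (2 * Real.pi) d, hc, ← Real.rpow_add h2π, ← Real.rpow_add h2π,
      show -(d:ℝ)/2 + -(d:ℝ)/2 + (d:ℝ) = 0 by ring, Real.rpow_zero]
  have hC : (c : ℂ) * (c : ℂ) * (↑|((2 * Real.pi)⁻¹ ^ d)⁻¹| : ℂ) = 1 := by
    rw [abs_of_pos (by positivity : (0:ℝ) < ((2 * Real.pi)⁻¹ ^ d)⁻¹), inv_pow, inv_inv]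
    norm_cast
  linear_combination (χ x) * hC.symm

noncomputable def uFn {d : ℕ} (χ : Ed d → ℂ) (ξ₀ : Ed d) (r μ : ℝ) (x : Ed d) : ℂ :=
  ((r ^ ((d : ℝ) / 2) : ℝ) : ℂ) * χ (r • x) *
    Complex.exp (Complex.I * (μ : ℂ) * ((inner ℝ ξ₀ x : ℝ) : ℂ))

theorem dilate_int {d : ℕ} (χ : SchwartzMap (Ed d) ℂ) (r : ℝ) (hr : 0 < r) (ν : Ed d) :
    ∫ x : Ed d, Complex.exp (-Complex.I * ((inner ℝ ν x : ℝ) : ℂ)) * χ (r • x)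
      = (((r ^ d : ℝ)⁻¹ : ℝ) : ℂ) * ((((2 * Real.pi) ^ (-(d : ℝ) / 2) : ℝ) : ℂ))⁻¹ *
        FT ⇑χ (r⁻¹ • ν) := by
  have h2π : (0:ℝ) < 2 * Real.pi := by positivity
  set c : ℝ := (2 * Real.pi) ^ (-(d : ℝ) / 2) with hc
  have hcpos : 0 < c := Real.rpow_pos_of_pos h2π _
  set h : Ed d → ℂ := fun y => Complex.exp (-Complex.I * ((inner ℝ (r⁻¹ • ν) y : ℝ) : ℂ)) * χ y
    with hh
  have h1 : ∫ x : Ed d, Complex.exp (-Complex.I * ((inner ℝ ν x : ℝ) : ℂ)) * χ (r • x)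
      = ∫ x : Ed d, h (r • x) := by
    refine integral_congr_ae (Eventually.of_forall fun x => ?_)
    rw [hh]
    beta_reduce
    rw [real_inner_smul_left, real_inner_smul_right, ← mul_assoc, inv_mul_cancel₀ hr.ne',
      one_mul]
  rw [h1, MeasureTheory.Measure.integral_comp_smul volume h r, finrank_euclideanSpace_fin]
  have habs : |((r:ℝ) ^ d)⁻¹| = (r ^ d)⁻¹ := abs_of_pos (by positivity)
  rw [habs]
  have h2 : ∫ y, h y = ((c : ℂ))⁻¹ * FT ⇑χ (r⁻¹ • ν) := by
    rw [FT, ← hc, ← mul_assoc, inv_mul_cancel₀ (by exact_mod_cast hcpos.ne' : (c:ℂ) ≠ 0),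
      one_mul]
  rw [h2, Complex.real_smul]
  ring

theorem FT_self_conj {d : ℕ} (χ : SchwartzMap (Ed d) ℂ)
    (hχim : ∀ ξ : Ed d, (FT ⇑χ ξ).im = 0) (ζ : Ed d) :
    (starRingEnd ℂ) (FT ⇑χ ζ) = FT ⇑χ ζ :=
  Complex.conj_eq_iff_im.2 (hχim ζ)

theorem stepD {d : ℕ} (χ : SchwartzMap (Ed d) ℂ)
    (hχim : ∀ ξ : Ed d, (FT ⇑χ ξ).im = 0) (ξ₀ : Ed d) (t μt : ℝ) (ht : 0 < t) (ζ : Ed d) :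
    ∫ x : Ed d, (starRingEnd ℂ) (uFn ⇑χ ξ₀ t μt x) * Complex.exp (Complex.I * ((inner ℝ x ζ : ℝ) : ℂ))
      = ((t ^ (-(d : ℝ) / 2) : ℝ) : ℂ) * ((((2 * Real.pi) ^ (-(d : ℝ) / 2) : ℝ) : ℂ))⁻¹ *
        FT ⇑χ (t⁻¹ • (ζ - μt • ξ₀)) := by
  have h1 : ∀ x : Ed d, (starRingEnd ℂ) (uFn ⇑χ ξ₀ t μt x) *
        Complex.exp (Complex.I * ((inner ℝ x ζ : ℝ) : ℂ))
      = ((t ^ ((d : ℝ) / 2) : ℝ) : ℂ) * (starRingEnd ℂ)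
          (Complex.exp (-Complex.I * ((inner ℝ (ζ - μt • ξ₀) x : ℝ) : ℂ)) * χ (t • x)) := by
    intro x
    rw [uFn]
    rw [map_mul, map_mul, map_mul]
    rw [← Complex.exp_conj, ← Complex.exp_conj]
    simp only [map_mul, Complex.conj_I, Complex.conj_ofReal, map_neg]
    rw [inner_sub_left, real_inner_smul_left, real_inner_comm ζ x]
    push_cast
    rw [neg_neg, show Complex.I * (((inner ℝ ζ x : ℝ) : ℂ) - (μt : ℂ) * ((inner ℝ ξ₀ x : ℝ) : ℂ))
        = -Complex.I * (μt : ℂ) * ((inner ℝ ξ₀ x : ℝ) : ℂ) + Complex.I * ((inner ℝ ζ x : ℝ) : ℂ)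
        by ring, Complex.exp_add]
    ring
  rw [integral_congr_ae (Eventually.of_forall h1), integral_const_mul, integral_conj,
    dilate_int χ t ht (ζ - μt • ξ₀)]
  rw [map_mul, map_mul, Complex.conj_ofReal, map_inv₀, Complex.conj_ofReal,
    FT_self_conj χ hχim]
  have hpow : (t ^ ((d : ℝ) / 2) : ℝ) * ((t:ℝ) ^ d)⁻¹ = t ^ (-(d : ℝ) / 2) := by
    rw [← Real.rpow_natCast t d, ← Real.rpow_neg ht.le, ← Real.rpow_add ht]
    norm_num
    ring_nf
  rw [← hpow]
  push_cast
  ring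

theorem norm_exp_I_mul (r : ℝ) : ‖Complex.exp (Complex.I * (r : ℂ))‖ = 1 := by
  rw [mul_comm, Complex.norm_exp_ofReal_mul_I]

theorem uFn_integrable {d : ℕ} (χ : SchwartzMap (Ed d) ℂ) (ξ₀ : Ed d) (r μ : ℝ) (hr : 0 < r) :
    Integrable (uFn ⇑χ ξ₀ r μ) := by
  have h1 : Integrable (fun x : Ed d => ((r ^ ((d : ℝ) / 2) : ℝ) : ℂ) * χ (r • x)) :=
    ((integrable_comp_smul_iff volume (⇑χ) hr.ne').2 χ.integrable).const_mul _
  have h2 := h1.bdd_mul (f := fun x : Ed d =>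
      Complex.exp (Complex.I * (μ : ℂ) * ((inner ℝ ξ₀ x : ℝ) : ℂ)))
    (by
      refine Continuous.aestronglyMeasurable ?_
      refine Complex.continuous_exp.comp ?_
      exact continuous_const.mul
        (Complex.continuous_ofReal.comp (continuous_const.inner continuous_id)))
    (c := 1) (Eventually.of_forall fun x => by
      have he : Complex.I * (μ : ℂ) * ((inner ℝ ξ₀ x : ℝ) : ℂ)
          = Complex.I * ((μ * (inner ℝ ξ₀ x : ℝ) : ℝ) : ℂ) := by push_cast; ring
      simp only [he, norm_exp_I_mul, le_refl])
  refine h2.congr (Eventually.of_forall fun x => ?_)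
  rw [uFn]; ring

theorem uFn_cont {d : ℕ} (χ : SchwartzMap (Ed d) ℂ) (ξ₀ : Ed d) (r μ : ℝ) :
    Continuous (uFn ⇑χ ξ₀ r μ) := by
  refine (continuous_const.mul (χ.continuous.comp (continuous_const_smul r))).mul ?_
  exact Complex.continuous_exp.comp (continuous_const.mul
    (Complex.continuous_ofReal.comp (continuous_const.inner continuous_id)))

theorem main_repr {d : ℕ} (χ : SchwartzMap (Ed d) ℂ)
    (hχim : ∀ ξ : Ed d, (FT ⇑χ ξ).im = 0)
    (hχsupp : ∀ ξ : Ed d, 1 ≤ ‖ξ‖ → FT ⇑χ ξ = 0)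
    (ξ₀ : Ed d) (t s μt μs : ℝ) (ht : 0 < t) (hs : 0 < s) :
    ∫ x : Ed d, (starRingEnd ℂ) (uFn ⇑χ ξ₀ t μt x) * uFn ⇑χ ξ₀ s μs x
      = ((s ^ ((d : ℝ) / 2) * t ^ (-(d : ℝ) / 2) : ℝ) : ℂ) *
        ∫ η : Ed d, FT ⇑χ η * FT ⇑χ (t⁻¹ • (s • η + μs • ξ₀ - μt • ξ₀)) := by
  have h2π : (0:ℝ) < 2 * Real.pi := by positivity
  set c : ℝ := (2 * Real.pi) ^ (-(d : ℝ) / 2) with hc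
  have hcpos : 0 < c := Real.rpow_pos_of_pos h2π _
  set P : Ed d → Ed d → ℂ := fun x η =>
    (c : ℂ) * ((s ^ ((d : ℝ) / 2) : ℝ) : ℂ) * (FT ⇑χ η *
      ((starRingEnd ℂ) (uFn ⇑χ ξ₀ t μt x) *
        Complex.exp (Complex.I * ((inner ℝ x (s • η + μs • ξ₀) : ℝ) : ℂ)))) with hP
  -- pointwise identity
  have hexpand : ∀ x η : Ed d,
      Complex.exp (Complex.I * ((inner ℝ x (s • η + μs • ξ₀) : ℝ) : ℂ))
        = Complex.exp (Complex.I * ((inner ℝ (s • x) η : ℝ) : ℂ)) *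
          Complex.exp (Complex.I * (μs : ℂ) * ((inner ℝ ξ₀ x : ℝ) : ℂ)) := by
    intro x η
    rw [← Complex.exp_add]
    congr 1
    rw [inner_add_right, real_inner_smul_right, real_inner_smul_left,
      real_inner_smul_right, real_inner_comm ξ₀ x]
    push_cast
    ring
  have hpt : ∀ x : Ed d, (starRingEnd ℂ) (uFn ⇑χ ξ₀ t μt x) * uFn ⇑χ ξ₀ s μs x
      = ∫ η : Ed d, P x η := by
    intro x
    rw [hP]
    simp only
    rw [integral_const_mul]
    have h1 : ∀ η : Ed d, FT ⇑χ η * ((starRingEnd ℂ) (uFn ⇑χ ξ₀ t μt x) *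
          Complex.exp (Complex.I * ((inner ℝ x (s • η + μs • ξ₀) : ℝ) : ℂ)))
        = ((starRingEnd ℂ) (uFn ⇑χ ξ₀ t μt x) *
            Complex.exp (Complex.I * (μs : ℂ) * ((inner ℝ ξ₀ x : ℝ) : ℂ))) *
          (Complex.exp (Complex.I * ((inner ℝ (s • x) η : ℝ) : ℂ)) * FT ⇑χ η) := by
      intro η
      rw [hexpand x η]
      ring
    rw [integral_congr_ae (Eventually.of_forall h1), integral_const_mul]
    have hinv := FT_inversion χ hχsupp (s • x)
    have hχval : (χ (s • x) : ℂ) = (c : ℂ) *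
        ∫ η : Ed d, Complex.exp (Complex.I * ((inner ℝ (s • x) η : ℝ) : ℂ)) * FT ⇑χ η := hinv
    simp only [uFn]
    linear_combination ((starRingEnd ℂ) (((t ^ ((d : ℝ) / 2) : ℝ) : ℂ) * χ (t • x) *
      Complex.exp (Complex.I * (μt : ℂ) * ((inner ℝ ξ₀ x : ℝ) : ℂ))) *
      ((s ^ ((d : ℝ) / 2) : ℝ) : ℂ) *
      Complex.exp (Complex.I * (μs : ℂ) * ((inner ℝ ξ₀ x : ℝ) : ℂ))) * hχval
  rw [integral_congr_ae (Eventually.of_forall hpt)]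
  -- Fubini
  have hint : Integrable (Function.uncurry P) ((volume : Measure (Ed d)).prod volume) := by
    have hg : Integrable (fun z : Ed d × Ed d =>
        (c * s ^ ((d : ℝ) / 2) * ‖uFn ⇑χ ξ₀ t μt z.1‖) * ‖FT ⇑χ z.2‖)
        ((volume : Measure (Ed d)).prod volume) :=
      (((uFn_integrable χ ξ₀ t μt ht).norm.const_mul _).mul_prod (FT_int χ hχsupp).norm)
    refine hg.mono' ?_ (Eventually.of_forall fun z => ?_)
    · refine Continuous.aestronglyMeasurable ?_
      refine (continuous_const.mul ?_)
      refine Continuous.mul (FT_cont χ |>.comp continuous_snd) ?_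
      refine Continuous.mul ((continuous_star.comp (uFn_cont χ ξ₀ t μt)).comp continuous_fst) ?_
      refine Complex.continuous_exp.comp (continuous_const.mul ?_)
      exact Complex.continuous_ofReal.comp
        (continuous_fst.inner ((continuous_snd.const_smul s).add continuous_const))
    · rw [Function.uncurry, hP]
      simp only
      have he : ‖Complex.exp (Complex.I * ((inner ℝ z.1 (s • z.2 + μs • ξ₀) : ℝ) : ℂ))‖ = 1 :=
        norm_exp_I_mul _
      rw [norm_mul, norm_mul, norm_mul, norm_mul, he, RCLike.norm_conj, mul_one,
        Complex.norm_real, Complex.norm_real, Real.norm_eq_abs, Real.norm_eq_abs,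
        abs_of_pos hcpos, abs_of_pos (Real.rpow_pos_of_pos hs _)]
      ring_nf
      exact le_refl _
  rw [integral_integral_swap hint]
  -- inner integral via stepD
  have hinner : ∀ η : Ed d, ∫ x : Ed d, P x η
      = (c : ℂ) * ((s ^ ((d : ℝ) / 2) : ℝ) : ℂ) * (FT ⇑χ η *
          (((t ^ (-(d : ℝ) / 2) : ℝ) : ℂ) * ((c : ℝ) : ℂ)⁻¹ *
            FT ⇑χ (t⁻¹ • (s • η + μs • ξ₀ - μt • ξ₀)))) := by
    intro η
    rw [hP]
    simp only
    rw [integral_const_mul, integral_const_mul, stepD χ hχim ξ₀ t μt ht (s • η + μs • ξ₀)]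
  rw [integral_congr_ae (Eventually.of_forall hinner), integral_const_mul]
  have h2 : ∀ η : Ed d, FT ⇑χ η * (((t ^ (-(d : ℝ) / 2) : ℝ) : ℂ) * ((c : ℝ) : ℂ)⁻¹ *
        FT ⇑χ (t⁻¹ • (s • η + μs • ξ₀ - μt • ξ₀)))
      = (((t ^ (-(d : ℝ) / 2) : ℝ) : ℂ) * ((c : ℝ) : ℂ)⁻¹) *
        (FT ⇑χ η * FT ⇑χ (t⁻¹ • (s • η + μs • ξ₀ - μt • ξ₀))) := fun η => by ring
  rw [integral_congr_ae (Eventually.of_forall h2), integral_const_mul]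
  have hcne : ((c : ℝ) : ℂ) ≠ 0 := by exact_mod_cast hcpos.ne'
  push_cast
  field_simp


end Aux

theorem stmt12 {d : ℕ} (χ : SchwartzMap (Ed d) ℂ) (b : ℝ) (hb : 0 < b)
    (hχim : ∀ ξ : Ed d, (FT ⇑χ ξ).im = 0)
    (hχrange : ∀ ξ : Ed d, 0 ≤ (FT ⇑χ ξ).re ∧ (FT ⇑χ ξ).re ≤ b)
    (hχlow : ∀ ξ : Ed d, ‖ξ‖ < 1 / 2 → (FT ⇑χ ξ).re = b)
    (hχsupp : ∀ ξ : Ed d, 1 ≤ ‖ξ‖ → FT ⇑χ ξ = 0)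
    (x₀ ξ₀ : Ed d) (hξ₀ : ‖ξ₀‖ = 1) (lam : ℝ) (hlam : 1 < lam)
    (T t s : ℝ) (hT : 0 < T)
    (ht : t ∈ Set.Icc T (2 * T)) (hs : s ∈ Set.Icc T (2 * T))
    (hts : |t ^ lam - s ^ lam| ≤ T / 4) :
    b ^ 2 * 2 ^ (-(d : ℝ) / 2) *
        (volume (Metric.ball (0 : Ed d) (1 / 4))).toReal
      ≤ ‖L2inner (wavePacket ⇑χ x₀ ξ₀ lam t) (wavePacket ⇑χ x₀ ξ₀ lam s)‖ := by
  have htpos : 0 < t := lt_of_lt_of_le hT ht.1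
  have hspos : 0 < s := lt_of_lt_of_le hT hs.1
  -- Step A: translate by x₀
  have hA : L2inner (wavePacket ⇑χ x₀ ξ₀ lam t) (wavePacket ⇑χ x₀ ξ₀ lam s)
      = ∫ x : Ed d, (starRingEnd ℂ) (uFn ⇑χ ξ₀ t (t ^ lam) x) * uFn ⇑χ ξ₀ s (s ^ lam) x := by
    rw [L2inner, ← integral_add_right_eq_self (fun x => (starRingEnd ℂ)
      (wavePacket ⇑χ x₀ ξ₀ lam t x) * wavePacket ⇑χ x₀ ξ₀ lam s x) x₀]
    refine integral_congr_ae (Eventually.of_forall fun x => ?_)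
    simp only [wavePacket, uFn, add_sub_cancel_right]
  -- the real integrand
  set A : Ed d → Ed d := fun η => t⁻¹ • (s • η + (s ^ lam) • ξ₀ - (t ^ lam) • ξ₀) with hAdef
  set g : Ed d → ℝ := fun η => (FT ⇑χ η).re * (FT ⇑χ (A η)).re with hgdef
  have hre : ∀ ζ : Ed d, FT ⇑χ ζ = (((FT ⇑χ ζ).re : ℝ) : ℂ) := fun ζ => by
    apply Complex.ext <;> simp [hχim ζ]
  have hB : L2inner (wavePacket ⇑χ x₀ ξ₀ lam t) (wavePacket ⇑χ x₀ ξ₀ lam s)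
      = (((s ^ ((d : ℝ) / 2) * t ^ (-(d : ℝ) / 2)) * ∫ η : Ed d, g η : ℝ) : ℂ) := by
    rw [hA, main_repr χ hχim hχsupp ξ₀ t s (t ^ lam) (s ^ lam) htpos hspos]
    have hcast : (∫ η : Ed d, ((g η : ℝ) : ℂ)) = (((∫ η : Ed d, g η) : ℝ) : ℂ) :=
      integral_ofReal
    have : ∫ η : Ed d, FT ⇑χ η * FT ⇑χ (t⁻¹ • (s • η + (s ^ lam) • ξ₀ - (t ^ lam) • ξ₀))
        = (((∫ η : Ed d, g η) : ℝ) : ℂ) := by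
      rw [← hcast]
      refine integral_congr_ae (Eventually.of_forall fun η => ?_)
      rw [hgdef]
      beta_reduce
      rw [Complex.ofReal_mul, ← hre, ← hre, hAdef]
    rw [this]
    push_cast
    ring
  rw [hB, Complex.norm_real]
  -- properties of g
  have hg_cont : Continuous g := by
    rw [hgdef]
    refine ((Complex.continuous_re.comp (FT_cont χ)).mul ?_)
    refine Complex.continuous_re.comp ((FT_cont χ).comp ?_)
    exact ((((continuous_id (X := Ed d)).const_smul s).add continuous_const).sub continuous_const).const_smul t⁻¹
  have hg_nonneg : ∀ η, 0 ≤ g η := fun η =>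
    mul_nonneg (hχrange η).1 (hχrange (A η)).1
  have hg_int : Integrable g := by
    refine hg_cont.integrable_of_hasCompactSupport ?_
    refine HasCompactSupport.intro (isCompact_closedBall (0 : Ed d) 1) fun η hη => ?_
    have h1 : (1:ℝ) ≤ ‖η‖ := le_of_lt (by simpa [Metric.mem_closedBall, dist_zero_right] using hη)
    rw [hgdef]
    beta_reduce
    rw [hχsupp η h1]
    simp
  -- the ball
  set z : Ed d := ((t ^ lam - s ^ lam) / s) • ξ₀ with hzdef
  have hznorm : ‖z‖ ≤ 1 / 4 := by
    rw [hzdef, norm_smul, hξ₀, mul_one, Real.norm_eq_abs, abs_div, abs_of_pos hspos]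
    rw [div_le_iff₀ hspos]
    calc |t ^ lam - s ^ lam| ≤ T / 4 := hts
      _ ≤ 1 / 4 * s := by linarith [hs.1]
  have hball : ∀ η ∈ Metric.ball z (1/4), g η = b * b := by
    intro η hη
    rw [Metric.mem_ball, dist_eq_norm] at hη
    have h1 : ‖η‖ < 1 / 2 := by
      calc ‖η‖ = ‖(η - z) + z‖ := by rw [sub_add_cancel]
        _ ≤ ‖η - z‖ + ‖z‖ := norm_add_le _ _
        _ < 1/4 + 1/4 := by linarith
        _ = 1/2 := by norm_num
    have hsz : s • z = (t ^ lam - s ^ lam) • ξ₀ := by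
      rw [hzdef, smul_smul, mul_div_cancel₀ _ hspos.ne']
    have hrw : s • η + (s ^ lam) • ξ₀ - (t ^ lam) • ξ₀ = s • (η - z) := by
      rw [smul_sub, hsz, sub_smul]
      abel
    have h2 : ‖A η‖ < 1 / 2 := by
      rw [hAdef]
      beta_reduce
      rw [hrw, smul_smul, norm_smul, Real.norm_eq_abs, abs_of_pos (by positivity)]
      calc t⁻¹ * s * ‖η - z‖ ≤ 2 * ‖η - z‖ := by
            have hst : t⁻¹ * s ≤ 2 := by
              rw [inv_mul_le_iff₀ htpos]
              calc s ≤ 2 * T := hs.2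
                _ ≤ t * 2 := by linarith [ht.1]
            exact mul_le_mul_of_nonneg_right hst (norm_nonneg _)
        _ < 2 * (1/4) := by
            exact mul_lt_mul_of_pos_left hη (by norm_num)
        _ = 1/2 := by norm_num
    rw [hgdef]
    beta_reduce
    rw [hχlow η h1, hχlow (A η) h2]
  -- lower bound of the integral
  have hvol_lt : volume (Metric.ball z (1/4)) < ⊤ := measure_ball_lt_top
  have hint_lb : b * b * (volume (Metric.ball (0 : Ed d) (1/4))).toReal ≤ ∫ η, g η := by
    have h1 : ∫ η in Metric.ball z (1/4), g η ≤ ∫ η, g η :=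
      setIntegral_le_integral hg_int (Eventually.of_forall hg_nonneg)
    have h2 : ∫ η in Metric.ball z (1/4), g η
        = (volume (Metric.ball z (1/4))).toReal • (b * b) := by
      rw [setIntegral_congr_fun Metric.isOpen_ball.measurableSet hball, setIntegral_const, measureReal_def]
    rw [Measure.addHaar_ball_center volume z (1/4)] at h2
    rw [smul_eq_mul] at h2
    calc b * b * (volume (Metric.ball (0 : Ed d) (1/4))).toReal
        = (volume (Metric.ball (0 : Ed d) (1/4))).toReal * (b * b) := by ring
      _ = ∫ η in Metric.ball z (1/4), g η := h2.symm
      _ ≤ ∫ η, g η := h1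
  -- final numeric comparison
  set K : ℝ := s ^ ((d : ℝ) / 2) * t ^ (-(d : ℝ) / 2) with hKdef
  have hKpos : 0 < K := mul_pos (Real.rpow_pos_of_pos hspos _) (Real.rpow_pos_of_pos htpos _)
  have hK_ge : 2 ^ (-(d : ℝ) / 2) ≤ K := by
    have hK_eq : K = (s / t) ^ ((d : ℝ) / 2) := by
      rw [hKdef, Real.div_rpow hspos.le htpos.le, neg_div, Real.rpow_neg htpos.le]
      ring
    have h2_eq : (2:ℝ) ^ (-(d : ℝ) / 2) = ((1:ℝ)/2) ^ ((d : ℝ) / 2) := by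
      rw [one_div, Real.inv_rpow (by norm_num : (0:ℝ) ≤ 2), ← Real.rpow_neg (by norm_num),
        neg_div]
    rw [hK_eq, h2_eq]
    refine Real.rpow_le_rpow (by norm_num) ?_ (by positivity)
    rw [div_le_div_iff₀ (by norm_num) htpos]
    calc 1 * t ≤ 2 * T := by linarith [ht.2]
      _ ≤ s * 2 := by linarith [hs.1]
  have hVnn : 0 ≤ (volume (Metric.ball (0 : Ed d) (1/4))).toReal := ENNReal.toReal_nonneg
  calc b ^ 2 * 2 ^ (-(d : ℝ) / 2) * (volume (Metric.ball (0 : Ed d) (1/4))).toReal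
      = 2 ^ (-(d : ℝ) / 2) * (b * b * (volume (Metric.ball (0 : Ed d) (1/4))).toReal) := by
        ring
    _ ≤ K * (b * b * (volume (Metric.ball (0 : Ed d) (1/4))).toReal) := by
        refine mul_le_mul_of_nonneg_right hK_ge (by positivity)
    _ ≤ K * ∫ η, g η := mul_le_mul_of_nonneg_left hint_lb hKpos.le
    _ ≤ |K * ∫ η, g η| := le_abs_self _
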